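/- arXiv:2202.07110 — 3 statements merged into one kernel-verified Lean document; each statement's English description precedes it below -/
import Mathlib

section
/- At every point x where g is differentiable (i.e., x not an integer), the derivative of g satisfies g'(x) = sinh(x - ⌊x⌋ - 1/2) / (2 sinh(1/2)), and moreover |g'(x)| < g(x). -/
/-- At every non-integer point `x`, the function
`g(x) = cosh(x - ⌊x⌋ - 1/2) / (2 sinh(1/2))` is differentiable with derivative
`g'(x) = sinh(x - ⌊x⌋ - 1/2) / (2 sinh(1/2))`, and `|g'(x)| < g(x)`. -/
theorem g_deriv_and_bound
    (g : ℝ → ℝ)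
    (hg : ∀ x : ℝ, g x = Real.cosh (x - ⌊x⌋ - 1/2) / (2 * Real.sinh (1/2))) :
    ∀ x : ℝ, (∀ n : ℤ, x ≠ (n : ℝ)) →
      HasDerivAt g (Real.sinh (x - ⌊x⌋ - 1/2) / (2 * Real.sinh (1/2))) x ∧
      |Real.sinh (x - ⌊x⌋ - 1/2) / (2 * Real.sinh (1/2))| < g x := by
  intro x hx
  have hd : (0:ℝ) < 2 * Real.sinh (1/2) := by
    have : (0:ℝ) < Real.sinh (1/2) := Real.sinh_pos_iff.mpr (by norm_num)
    linarith
  set c : ℝ := (⌊x⌋ : ℝ) + 1/2 with hc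
  have hlt : (⌊x⌋ : ℝ) < x := lt_of_le_of_ne (Int.floor_le x) (Ne.symm (hx ⌊x⌋))
  have hlt2 : x < (⌊x⌋ : ℝ) + 1 := Int.lt_floor_add_one x
  have hmem : x ∈ Set.Ioo ((⌊x⌋ : ℝ)) ((⌊x⌋ : ℝ) + 1) := ⟨hlt, hlt2⟩
  have hev : g =ᶠ[nhds x] fun y => Real.cosh (y - c) / (2 * Real.sinh (1/2)) := by
    filter_upwards [isOpen_Ioo.mem_nhds hmem] with y hy
    have hfy : ⌊y⌋ = ⌊x⌋ := by
      rw [Int.floor_eq_iff]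
      · exact ⟨le_of_lt hy.1, hy.2⟩
    rw [hg y, hfy, hc]
    ring_nf
  have h1 : HasDerivAt (fun y : ℝ => y - c) 1 x := (hasDerivAt_id x).sub_const c
  have h2 : HasDerivAt (fun y => Real.cosh (y - c) / (2 * Real.sinh (1/2)))
      (Real.sinh (x - c) * 1 / (2 * Real.sinh (1/2))) x :=
    ((Real.hasDerivAt_cosh (x - c)).comp x h1).div_const _
  have heq : x - c = x - ⌊x⌋ - 1/2 := by rw [hc]; ring
  have hder : HasDerivAt g (Real.sinh (x - ⌊x⌋ - 1/2) / (2 * Real.sinh (1/2))) x := by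
    have := h2.congr_of_eventuallyEq hev
    simpa [heq] using this
  refine ⟨hder, ?_⟩
  rw [hg x, abs_div, abs_of_pos hd]
  apply div_lt_div_of_pos_right ?_ hd
  set t := x - ⌊x⌋ - 1/2
  have h := Real.cosh_sq t
  nlinarith [abs_nonneg (Real.sinh t), sq_abs (Real.sinh t), Real.cosh_pos t]
end

section
/- Let u be a 1-periodic C² function with m = u - u'' nonnegative, and suppose u ≥ 0. Set C₁ = ∫₀¹ m(x) dx. If ξ ∈ ℝ satisfies u'(ξ) = 0, then for all x ∈ [ξ, ξ+1], |u'(x)| ≤ C₁ + ∫₀¹ u(r) dr. In particular ‖u'‖_∞ ≤ C₁ + ‖u‖_{L¹}. -/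
/-!
Since `u'(ξ) = 0`, the fundamental theorem of calculus writes `u'(x) = ∫_ξ^x u - ∫_ξ^x m`.
For `x ∈ [ξ, ξ + 1]` both integrands are nonnegative and periodic, so each integral lies between
`0` and the corresponding integral over a full period, which by periodicity is `∫₀¹ u`,
resp. `∫₀¹ m = C₁`.
-/

open Function intervalIntegral MeasureTheory

theorem Function.Periodic.deriv {𝕜 F : Type*} [NontriviallyNormedField 𝕜] [NormedAddCommGroup F]
    [NormedSpace 𝕜 F] {f : 𝕜 → F} {c : 𝕜} (hf : Periodic f c) : Periodic (deriv f) c := by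
  intro x
  rw [← deriv_comp_add_const, funext hf]

theorem Function.Periodic.intervalIntegral_le_integral_period {f : ℝ → ℝ} {T a x : ℝ}
    (hf : Periodic f T) (hf_nonneg : ∀ y, 0 ≤ f y) (hfi : IntervalIntegrable f volume a (a + T))
    (hax : a ≤ x) (hxT : x ≤ a + T) :
    ∫ y in a..x, f y ≤ ∫ y in 0..T, f y :=
  calc ∫ y in a..x, f y ≤ ∫ y in a..a + T, f y :=
        integral_mono_interval le_rfl hax hxT (ae_of_all _ hf_nonneg) hfi
    _ = ∫ y in 0..T, f y := by simpa using hf.intervalIntegral_add_eq a 0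

/-- If `u` is 1-periodic, `C²`, with `m = u - u'' ≥ 0` and `u ≥ 0`, and `u'(ξ) = 0`,
then for all `x ∈ [ξ, ξ+1]`, `|u'(x)| ≤ ∫₀¹ m + ∫₀¹ u`. -/
theorem deriv_bound_from_momentum
    (u : ℝ → ℝ)
    (hu : ContDiff ℝ 2 u)
    (hper : Function.Periodic u 1)
    (hm_nonneg : ∀ x : ℝ, 0 ≤ u x - deriv (deriv u) x)
    (hu_nonneg : ∀ x : ℝ, 0 ≤ u x)
    (ξ : ℝ)
    (hξ : deriv u ξ = 0) :
    ∀ x ∈ Set.Icc ξ (ξ + 1),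
      |deriv u x| ≤ (∫ r in (0:ℝ)..1, (u r - deriv (deriv u) r)) + ∫ r in (0:ℝ)..1, u r := by
  rintro x ⟨hξx, hx⟩
  have hu' : ContDiff ℝ 1 (deriv u) := hu.deriv'
  have hu_cont : Continuous u := hu.continuous
  have hm_cont : Continuous fun r => u r - deriv (deriv u) r :=
    hu_cont.sub (hu'.continuous_deriv le_rfl)
  have hm_per : Periodic (fun r => u r - deriv (deriv u) r) 1 := hper.sub hper.deriv.deriv
  have hftc : deriv u x = (∫ r in ξ..x, u r) - ∫ r in ξ..x, (u r - deriv (deriv u) r) := by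
    rw [← integral_sub (hu_cont.intervalIntegrable _ _) (hm_cont.intervalIntegrable _ _)]
    simp only [sub_sub_cancel]
    rw [integral_deriv_eq_sub (fun t _ => hu'.differentiable one_ne_zero t)
      ((hu'.continuous_deriv le_rfl).intervalIntegrable _ _), hξ, sub_zero]
  have hu_le := hper.intervalIntegral_le_integral_period hu_nonneg
    (hu_cont.intervalIntegrable _ _) hξx hx
  have hm_le := hm_per.intervalIntegral_le_integral_period hm_nonneg
    (hm_cont.intervalIntegrable _ _) hξx hx
  have hu_pos : 0 ≤ ∫ r in ξ..x, u r := integral_nonneg hξx fun r _ => hu_nonneg r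
  have hm_pos : 0 ≤ ∫ r in ξ..x, (u r - deriv (deriv u) r) :=
    integral_nonneg hξx fun r _ => hm_nonneg r
  rw [hftc, abs_le]
  constructor <;> linarith
end

section
/- Let f : 𝕊 → ℝ be continuous and nonnegative (1-periodic), let Λ⁻²f(x) = ∫₀¹ g(x-y) f(y) dy with g the strictly positive periodic Green's function, and let F(x) = (Λ⁻²f)'(x). If f ≡ 0 on [x₀, x₁] and F(x₀) = F(x₁), then f ≡ 0 on all of 𝕊. -/
open MeasureTheory Set Real

/-!
Write `c = 2 sinh (1/2)`. By periodicity, `Λ⁻²f (x) = K x / c` with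
`K x = ∫_{x-1}^x cosh (x - y - 1/2) f y dy` (`coshWindowIntegral 1 f`). Expanding
`cosh (x - y - 1/2)` separates the variables, so the sliding-window integral can be
differentiated twice; since `f (x - 1) = f x` the boundary terms combine into `F' = Λ⁻²f - f`.
Hence `0 = F x₁ - F x₀ = ∫_{x₀}^{x₁} Λ⁻²f`, so the continuous nonnegative `Λ⁻²f` vanishes at
`x₁`. The kernel being positive, `f` vanishes on `[x₁ - 1, x₁]`, a full period.
-/

theorem Continuous.eqOn_zero_of_nonneg_of_intervalIntegral_eq_zero {h : ℝ → ℝ}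
    (hc : Continuous h) (hnn : ∀ x, 0 ≤ h x) {a b : ℝ} (hab : a < b)
    (hint : ∫ x in a..b, h x = 0) : EqOn h 0 (Icc a b) := by
  rw [intervalIntegral.integral_of_le hab.le, ← integral_Icc_eq_integral_Ioc,
    integral_eq_zero_iff_of_nonneg hnn hc.integrableOn_Icc] at hint
  refine Measure.eqOn_of_ae_eq hint hc.continuousOn continuousOn_const ?_
  rw [interior_Icc, closure_Ioo hab.ne]

theorem Function.Periodic.eq_zero_of_eqOn_Icc {f : ℝ → ℝ} {T : ℝ}
    (hf : Function.Periodic f T) (hT : 0 < T) {a : ℝ} (h : EqOn f 0 (Icc (a - T) a)) (x : ℝ) :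
    f x = 0 := by
  obtain ⟨y, hy, hxy⟩ := hf.exists_mem_Ioc hT x (a - T)
  rw [hxy, h ⟨hy.1.le, by simpa using hy.2⟩]
  rfl

theorem Continuous.hasDerivAt_intervalIntegral_window {h : ℝ → ℝ} (hh : Continuous h)
    (T x : ℝ) : HasDerivAt (fun t => ∫ y in (t - T)..t, h y) (h x - h (x - T)) x := by
  have hdiff := (hh.integral_hasStrictDerivAt 0 x).hasDerivAt.sub
    ((hh.integral_hasStrictDerivAt 0 (x - T)).hasDerivAt.comp x ((hasDerivAt_id x).sub_const T))
  refine (hdiff.congr_deriv (by simp)).congr_of_eventuallyEq (.of_forall fun t => ?_)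
  exact (intervalIntegral.integral_interval_sub_left (hh.intervalIntegrable _ _)
    (hh.intervalIntegrable _ _)).symm

theorem integral_cosh_sub_mul {f : ℝ → ℝ} (hf : Continuous f) (a b c : ℝ) :
    ∫ y in a..b, cosh (c - y) * f y =
      cosh c * (∫ y in a..b, cosh y * f y) - sinh c * ∫ y in a..b, sinh y * f y := by
  rw [← intervalIntegral.integral_const_mul, ← intervalIntegral.integral_const_mul,
    ← intervalIntegral.integral_sub]
  · congr 1; ext y; rw [cosh_sub]; ring
  all_goals exact (continuous_const.mul (by fun_prop)).intervalIntegrable _ _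

theorem integral_sinh_sub_mul {f : ℝ → ℝ} (hf : Continuous f) (a b c : ℝ) :
    ∫ y in a..b, sinh (c - y) * f y =
      sinh c * (∫ y in a..b, cosh y * f y) - cosh c * ∫ y in a..b, sinh y * f y := by
  rw [← intervalIntegral.integral_const_mul, ← intervalIntegral.integral_const_mul,
    ← intervalIntegral.integral_sub]
  · congr 1; ext y; rw [sinh_sub]; ring
  all_goals exact (continuous_const.mul (by fun_prop)).intervalIntegrable _ _

theorem Real.cosh_sub_cosh_sub (x T : ℝ) :
    cosh x - cosh (x - T) = 2 * sinh (x - T / 2) * sinh (T / 2) := by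
  have h₁ := cosh_add (x - T / 2) (T / 2)
  have h₂ := cosh_sub (x - T / 2) (T / 2)
  simp only [sub_add_cancel, sub_sub, add_halves] at h₁ h₂
  linarith

theorem Real.sinh_sub_sinh_sub (x T : ℝ) :
    sinh x - sinh (x - T) = 2 * cosh (x - T / 2) * sinh (T / 2) := by
  have h₁ := sinh_add (x - T / 2) (T / 2)
  have h₂ := sinh_sub (x - T / 2) (T / 2)
  simp only [sub_add_cancel, sub_sub, add_halves] at h₁ h₂
  linarith

noncomputable def coshWindowIntegral (T : ℝ) (f : ℝ → ℝ) (x : ℝ) : ℝ :=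
  ∫ y in (x - T)..x, cosh (x - y - T / 2) * f y

noncomputable def sinhWindowIntegral (T : ℝ) (f : ℝ → ℝ) (x : ℝ) : ℝ :=
  ∫ y in (x - T)..x, sinh (x - y - T / 2) * f y

section Window

variable {f : ℝ → ℝ} {T : ℝ}

theorem hasDerivAt_intervalIntegral_window_mul_of_periodic {φ : ℝ → ℝ} (hφ : Continuous φ)
    (hf : Continuous f) (hp : Function.Periodic f T) (x : ℝ) :
    HasDerivAt (fun t => ∫ y in (t - T)..t, φ y * f y) ((φ x - φ (x - T)) * f x) x := by
  have h := (hφ.mul hf).hasDerivAt_intervalIntegral_window T x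
  simp only [Pi.mul_apply, hp.sub_eq] at h
  exact h.congr_deriv (sub_mul _ _ _).symm

theorem hasDerivAt_coshWindowIntegral (hf : Continuous f) (hp : Function.Periodic f T) (x : ℝ) :
    HasDerivAt (coshWindowIntegral T f) (sinhWindowIntegral T f x) x := by
  unfold coshWindowIntegral sinhWindowIntegral
  simp_rw [sub_right_comm _ _ (T / 2), integral_cosh_sub_mul hf, integral_sinh_sub_mul hf]
  have hu := (hasDerivAt_id' x).sub_const (T / 2)
  have hC := hasDerivAt_intervalIntegral_window_mul_of_periodic continuous_cosh hf hp x
  have hS := hasDerivAt_intervalIntegral_window_mul_of_periodic continuous_sinh hf hp x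
  refine ((hu.cosh.fun_mul hC).fun_sub (hu.sinh.fun_mul hS)).congr_deriv ?_
  rw [cosh_sub_cosh_sub, sinh_sub_sinh_sub]
  ring

theorem hasDerivAt_sinhWindowIntegral (hf : Continuous f) (hp : Function.Periodic f T) (x : ℝ) :
    HasDerivAt (sinhWindowIntegral T f)
      (coshWindowIntegral T f x - 2 * sinh (T / 2) * f x) x := by
  unfold coshWindowIntegral sinhWindowIntegral
  simp_rw [sub_right_comm _ _ (T / 2), integral_cosh_sub_mul hf, integral_sinh_sub_mul hf]
  have hu := (hasDerivAt_id' x).sub_const (T / 2)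
  have hC := hasDerivAt_intervalIntegral_window_mul_of_periodic continuous_cosh hf hp x
  have hS := hasDerivAt_intervalIntegral_window_mul_of_periodic continuous_sinh hf hp x
  refine ((hu.sinh.fun_mul hC).fun_sub (hu.cosh.fun_mul hS)).congr_deriv ?_
  rw [cosh_sub_cosh_sub, sinh_sub_sinh_sub]
  linear_combination -2 * sinh (T / 2) * f x * cosh_sq_sub_sinh_sq (x - T / 2)

theorem coshWindowIntegral_nonneg (hnn : ∀ y, 0 ≤ f y) (hT : 0 ≤ T) (x : ℝ) :
    0 ≤ coshWindowIntegral T f x :=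
  intervalIntegral.integral_nonneg (by linarith) fun y _ => mul_nonneg (cosh_pos _).le (hnn y)

theorem eqOn_zero_of_coshWindowIntegral_eq_zero (hf : Continuous f) (hnn : ∀ y, 0 ≤ f y)
    (hT : 0 < T) {x : ℝ} (h : coshWindowIntegral T f x = 0) : EqOn f 0 (Icc (x - T) x) := by
  intro y hy
  have hprod := (Continuous.eqOn_zero_of_nonneg_of_intervalIntegral_eq_zero (by fun_prop)
    (fun y => mul_nonneg (cosh_pos _).le (hnn y)) (by linarith) h) hy
  exact (mul_eq_zero.1 hprod).resolve_left (cosh_pos _).ne'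

theorem eq_zero_of_eqOn_Icc_of_sinhWindowIntegral_eq (hf : Continuous f)
    (hp : Function.Periodic f T) (hnn : ∀ y, 0 ≤ f y) (hT : 0 < T) {x₀ x₁ : ℝ} (hx : x₀ < x₁)
    (hvanish : EqOn f 0 (Icc x₀ x₁))
    (heq : sinhWindowIntegral T f x₀ = sinhWindowIntegral T f x₁) (x : ℝ) : f x = 0 := by
  have hK_cont : Continuous (coshWindowIntegral T f) :=
    continuous_iff_continuousAt.2 fun x => (hasDerivAt_coshWindowIntegral hf hp x).continuousAt
  have hK_int : ∫ x in x₀..x₁, coshWindowIntegral T f x = 0 :=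
    calc ∫ x in x₀..x₁, coshWindowIntegral T f x
        = ∫ x in x₀..x₁, coshWindowIntegral T f x - 2 * sinh (T / 2) * f x :=
          intervalIntegral.integral_congr fun y hy => by
            simp [hvanish (uIcc_of_le hx.le ▸ hy)]
      _ = sinhWindowIntegral T f x₁ - sinhWindowIntegral T f x₀ :=
          intervalIntegral.integral_eq_sub_of_hasDerivAt
            (fun y _ => hasDerivAt_sinhWindowIntegral hf hp y)
            ((hK_cont.sub (continuous_const.mul hf)).intervalIntegrable x₀ x₁)
      _ = 0 := by rw [heq, sub_self]
  have hK₁ := hK_cont.eqOn_zero_of_nonneg_of_intervalIntegral_eq_zero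
    (coshWindowIntegral_nonneg hnn hT.le) hx hK_int ⟨hx.le, le_rfl⟩
  exact hp.eq_zero_of_eqOn_Icc hT (eqOn_zero_of_coshWindowIntegral_eq_zero hf hnn hT hK₁) x

end Window

theorem cosh_sub_floor_sub_half {t : ℝ} (h₀ : 0 ≤ t) (h₁ : t ≤ 1) :
    cosh (t - ⌊t⌋ - 1 / 2) = cosh (t - 1 / 2) := by
  rcases h₁.lt_or_eq with h₁ | rfl
  · simp [Int.floor_eq_zero_iff.2 ⟨h₀, h₁⟩]
  · rw [← cosh_neg]
    norm_num

theorem integral_green_mul_eq {g f : ℝ → ℝ}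
    (hg : ∀ x, g x = cosh (x - ⌊x⌋ - 1 / 2) / (2 * sinh (1 / 2))) (hf : Function.Periodic f 1)
    (x : ℝ) :
    ∫ y in (0 : ℝ)..1, g (x - y) * f y = coshWindowIntegral 1 f x / (2 * sinh (1 / 2)) := by
  have hgp : Function.Periodic g 1 := fun t => by
    simp only [hg, Int.floor_add_one]
    push_cast
    ring_nf
  have hshift := ((hgp.const_sub x).mul hf).intervalIntegral_add_eq 0 (x - 1)
  simp only [zero_add, sub_add_cancel, Pi.mul_apply] at hshift
  rw [hshift, coshWindowIntegral, ← intervalIntegral.integral_div]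
  refine intervalIntegral.integral_congr fun y hy => ?_
  rw [uIcc_of_le (by linarith)] at hy
  rw [hg, cosh_sub_floor_sub_half (by linarith [hy.2]) (by linarith [hy.1])]
  ring

/-- If `f` is continuous, 1-periodic, nonnegative, `Λ⁻²f(x) = ∫₀¹ g(x-y) f(y) dy`,
`F = (Λ⁻²f)'`, and `f ≡ 0` on `[x₀, x₁]` with `F(x₀) = F(x₁)`, then `f ≡ 0`. -/
theorem unique_continuation_from_interval
    (g f : ℝ → ℝ)
    (hg : ∀ x : ℝ, g x = Real.cosh (x - ⌊x⌋ - 1/2) / (2 * Real.sinh (1/2)))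
    (hf_cont : Continuous f)
    (hf_per : Function.Periodic f 1)
    (hf_nonneg : ∀ x : ℝ, 0 ≤ f x)
    (Λf F : ℝ → ℝ)
    (hΛf : ∀ x : ℝ, Λf x = ∫ y in (0:ℝ)..1, g (x - y) * f y)
    (hF : ∀ x : ℝ, F x = deriv Λf x)
    (x₀ x₁ : ℝ) (hx : x₀ < x₁)
    (hvanish : ∀ x ∈ Set.Icc x₀ x₁, f x = 0)
    (hFeq : F x₀ = F x₁) :
    ∀ x : ℝ, f x = 0 := by
  have hc : 2 * sinh (1 / 2) ≠ 0 := (mul_pos two_pos (sinh_pos_iff.2 one_half_pos)).ne'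
  have hΛK : Λf = fun x => coshWindowIntegral 1 f x / (2 * sinh (1 / 2)) :=
    funext fun x => (hΛf x).trans (integral_green_mul_eq hg hf_per x)
  have hFJ : ∀ x, F x = sinhWindowIntegral 1 f x / (2 * sinh (1 / 2)) := fun x => by
    rw [hF, hΛK, ((hasDerivAt_coshWindowIntegral hf_cont hf_per x).div_const _).deriv]
  rw [hFJ, hFJ, div_left_inj' hc] at hFeq
  exact eq_zero_of_eqOn_Icc_of_sinhWindowIntegral_eq hf_cont hf_per hf_nonneg one_pos hx
    hvanish hFeq
end
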